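/- Let V be a finite-dimensional complex inner product space with a ℤ/2-grading V = V⁰ ⊕ V¹, and let d, T : V → V be linear maps with d odd (mapping V⁰ to V¹ and V¹ to V⁰), T even, d² = 0, and Td = dT. Let Δ = (d + d*)². Then for every t > 0, Str(T e^{-tΔ}) = Str(T restricted to ker Δ), where Str(S) = Tr(S|_{V⁰}) − Tr(S|_{V¹}). -/

import Mathlib

/-!
Write `Δ = d d† + d† d` and let `P` be the orthogonal projection onto `ker Δ`. Since `Δ` is
self-adjoint, `Δ + P` is invertible and `Δ (Δ + P)⁻¹ = 1 - P`, so `e^{-tΔ} = P + Δ g` with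
`g = (e^{-tΔ} - P)(Δ + P)⁻¹`, and `g` commutes with `d` because `d` commutes with `Δ` and `P`.
As `T` commutes with `d` too, `T Δ g = d X + X d` for `X = T d† g`, and the supertrace of
`d X + X d` vanishes for every `X` because the grading anticommutes with `d`.
-/

open ContinuousLinearMap

section Supertrace

variable {R M : Type*} [CommRing R] [AddCommGroup M] [Module R M]

noncomputable def supertrace (ε S : Module.End R M) : R :=
  LinearMap.trace R M (ε * S)

theorem supertrace_mul_add_mul_eq_zero {ε d : Module.End R M} (hεd : ε * d = -(d * ε))
    (X : Module.End R M) : supertrace ε (d * X + X * d) = 0 := by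
  have h : LinearMap.trace R M (ε * (d * X)) = -LinearMap.trace R M (ε * (X * d)) := by
    rw [← mul_assoc, hεd, neg_mul, map_neg, mul_assoc, LinearMap.trace_mul_comm, mul_assoc]
  rw [supertrace, mul_add, map_add, h, neg_add_cancel]

theorem supertrace_mul_anticommutator_mul_eq_zero {ε d T g : Module.End R M}
    (hεd : ε * d = -(d * ε)) (hTd : Commute T d) (hgd : Commute g d) (d' : Module.End R M) :
    supertrace ε (T * ((d * d' + d' * d) * g)) = 0 := by
  have h : T * ((d * d' + d' * d) * g) = d * (T * d' * g) + T * d' * g * d :=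
    calc T * ((d * d' + d' * d) * g) = T * d * d' * g + T * d' * (d * g) := by noncomm_ring
      _ = d * (T * d' * g) + T * d' * g * d := by rw [hTd.eq, ← hgd.eq]; noncomm_ring
  rw [h, supertrace_mul_add_mul_eq_zero hεd]

end Supertrace

theorem Module.End.mul_eq_neg_mul_of_odd {R M : Type*} [Ring R] [AddCommGroup M] [Module R M]
    {V₀ V₁ : Submodule R M} (hV : V₀ ⊔ V₁ = ⊤) {ε A : Module.End R M}
    (hε₀ : ∀ x ∈ V₀, ε x = x) (hε₁ : ∀ x ∈ V₁, ε x = -x)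
    (hA₀ : ∀ x ∈ V₀, A x ∈ V₁) (hA₁ : ∀ x ∈ V₁, A x ∈ V₀) :
    ε * A = -(A * ε) := by
  ext x
  obtain ⟨y, hy, z, hz, rfl⟩ := Submodule.mem_sup.1 (hV ▸ Submodule.mem_top : x ∈ V₀ ⊔ V₁)
  simp only [Module.End.mul_apply, LinearMap.neg_apply, map_add, hε₀ y hy, hε₁ z hz,
    hε₁ _ (hA₀ y hy), hε₀ _ (hA₁ z hz), map_neg, neg_neg]

theorem commute_mul_add_mul_of_mul_self_eq_zero {A : Type*} [Semiring A] {a : A}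
    (ha : a * a = 0) (b : A) : Commute a (a * b + b * a) := by
  rw [Commute, SemiconjBy, mul_add, add_mul, ← mul_assoc, ha, zero_mul, zero_add, mul_assoc b, ha,
    mul_zero, add_zero, mul_assoc]

theorem mul_units_inv_eq_one_sub {A : Type*} [Ring A] {a p : A} {u : Aˣ} (hu : (u : A) = a + p)
    (hp : IsIdempotentElem p) (hpa : p * a = 0) : a * ↑u⁻¹ = 1 - p := by
  have h : (1 - p) * u = a := by
    rw [hu, sub_mul, one_mul, mul_add, hpa, hp.eq, zero_add, add_sub_cancel_right]
  rw [← h, Units.mul_inv_cancel_right]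

theorem NormedSpace.exp_mul_of_mul_eq_zero (𝕂 : Type*) {𝔸 : Type*} [RCLike 𝕂] [NormedRing 𝔸]
    [NormedAlgebra 𝕂 𝔸] [CompleteSpace 𝔸] {a p : 𝔸} (h : a * p = 0) : exp a * p = p := by
  have hsum := (exp_series_hasSum_exp' (𝕂 := 𝕂) a).mul_right p
  refine hsum.unique (hasSum_single 0 fun n hn => ?_) |>.trans (by simp)
  obtain ⟨m, rfl⟩ := Nat.exists_eq_succ_of_ne_zero hn
  rw [smul_mul_assoc, pow_succ, mul_assoc, h, mul_zero, smul_zero]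

section KernelProjection

variable {𝕜 E : Type*} [RCLike 𝕜] [NormedAddCommGroup E] [InnerProductSpace 𝕜 E]
  {Δ : E →L[𝕜] E} [Δ.ker.HasOrthogonalProjection]

theorem mul_starProjection_ker : Δ * Δ.ker.starProjection = 0 := by
  ext x
  exact Δ.ker.starProjection_apply_mem x

theorem starProjection_ker_mul_of_mul_eq_zero {X : E →L[𝕜] E} (hX : Δ * X = 0) :
    Δ.ker.starProjection * X = X := by
  ext x
  exact Submodule.starProjection_eq_self_iff.2 (congr($hX x))

variable [CompleteSpace E]

theorem starProjection_ker_mul (hΔ : IsSelfAdjoint Δ) : Δ.ker.starProjection * Δ = 0 := by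
  rw [← star_eq_zero, star_mul, hΔ.star_eq, (isSelfAdjoint_starProjection _).star_eq,
    mul_starProjection_ker]

theorem commute_starProjection_ker {A : E →L[𝕜] E} (hA : Commute A Δ) (hA' : Commute (star A) Δ) :
    Commute A Δ.ker.starProjection := by
  set P := Δ.ker.starProjection
  have hAP : P * (A * P) = A * P := starProjection_ker_mul_of_mul_eq_zero (by
    rw [← mul_assoc, ← hA.eq, mul_assoc, mul_starProjection_ker, mul_zero])
  have hA'P : P * (star A * P) = star A * P := starProjection_ker_mul_of_mul_eq_zero (by
    rw [← mul_assoc, ← hA'.eq, mul_assoc, mul_starProjection_ker, mul_zero])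
  have hPA : P * A * P = P * A := by
    have hP : star P = P := (isSelfAdjoint_starProjection _).star_eq
    simpa only [star_mul, star_star, hP, mul_assoc] using congr(star $hA'P)
  rw [Commute, SemiconjBy, ← hAP, ← mul_assoc, hPA]

theorem isUnit_add_starProjection_ker [FiniteDimensional 𝕜 E] (hΔ : IsSelfAdjoint Δ) :
    IsUnit (Δ + Δ.ker.starProjection) := by
  set P := Δ.ker.starProjection
  have hPΔP : P * (Δ + P) = P := by
    rw [mul_add, starProjection_ker_mul hΔ, (Submodule.isIdempotentElem_starProjection _).eq,
      zero_add]
  rw [isUnit_iff_isUnit_toLinearMap, LinearMap.isUnit_iff_ker_eq_bot, Submodule.eq_bot_iff]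
  intro x (hx : (Δ + P) x = 0)
  have hPx : P x = 0 := by
    rw [← hPΔP]
    exact congr(P $hx).trans (map_zero P)
  have hxK : x ∈ Δ.ker := by simpa [hPx] using hx
  rwa [← Submodule.starProjection_eq_self_iff.2 hxK]

theorem exists_eq_starProjection_ker_add_mul_commute [FiniteDimensional 𝕜 E]
    (hΔ : IsSelfAdjoint Δ) {S A : E →L[𝕜] E} (hSΔ : Commute S Δ)
    (hSP : S * Δ.ker.starProjection = Δ.ker.starProjection) (hAΔ : Commute A Δ)
    (hAP : Commute A Δ.ker.starProjection) (hAS : Commute A S) :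
    ∃ g, S = Δ.ker.starProjection + Δ * g ∧ Commute g A := by
  set P := Δ.ker.starProjection
  have hP : IsIdempotentElem P := Submodule.isIdempotentElem_starProjection _
  have hPΔ : Commute P Δ := (starProjection_ker_mul hΔ).trans mul_starProjection_ker.symm
  obtain ⟨u, hu⟩ := isUnit_add_starProjection_ker hΔ
  have hΔu : Δ * ↑u⁻¹ = 1 - P := mul_units_inv_eq_one_sub hu hP (starProjection_ker_mul hΔ)
  refine ⟨(S - P) * ↑u⁻¹, ?_, ?_⟩
  · rw [← mul_assoc, ← (hSΔ.sub_left hPΔ).eq, mul_assoc, hΔu, mul_sub, mul_one, sub_mul, hSP,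
      hP.eq]
    abel
  · exact ((hAS.sub_right hAP).mul_right (hu ▸ hAΔ.add_right hAP).units_inv_right).symm

end KernelProjection

section Laplacian

variable {𝕜 E : Type*} [RCLike 𝕜] [NormedAddCommGroup E] [InnerProductSpace 𝕜 E]
  [CompleteSpace E] {d : E →L[𝕜] E}

noncomputable def laplacian (d : E →L[𝕜] E) : E →L[𝕜] E :=
  d * adjoint d + adjoint d * d

theorem add_adjoint_mul_self_eq_laplacian (hd : d * d = 0) :
    (d + adjoint d) * (d + adjoint d) = laplacian d := by
  have hd' : adjoint d * adjoint d = 0 := by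
    simpa only [← star_eq_adjoint, star_mul, star_zero] using congr(star $hd)
  rw [laplacian, add_mul, mul_add, mul_add, hd, hd', zero_add, add_zero]

theorem isSelfAdjoint_laplacian (d : E →L[𝕜] E) : IsSelfAdjoint (laplacian d) := by
  rw [laplacian, ← star_eq_adjoint]
  exact (IsSelfAdjoint.mul_star_self d).add (IsSelfAdjoint.star_mul_self d)

theorem commute_laplacian (hd : d * d = 0) : Commute d (laplacian d) :=
  commute_mul_add_mul_of_mul_self_eq_zero hd _

theorem commute_starProjection_ker_laplacian (hd : d * d = 0)
    [(laplacian d).ker.HasOrthogonalProjection] :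
    Commute d (laplacian d).ker.starProjection := by
  have hd' : star d * star d = 0 := by rw [← star_mul, hd, star_zero]
  refine commute_starProjection_ker (commute_laplacian hd) ?_
  rw [laplacian, ← star_eq_adjoint, add_comm]
  exact commute_mul_add_mul_of_mul_self_eq_zero hd' d

end Laplacian

theorem mckean_singer_supertrace_general
    (V : Type*) [NormedAddCommGroup V] [InnerProductSpace ℂ V]
    [FiniteDimensional ℂ V]
    (V₀ : Submodule ℂ V)
    (d T : V →L[ℂ] V)
    (hdodd₀ : ∀ x ∈ V₀, d x ∈ V₀ᗮ) (hdodd₁ : ∀ x ∈ V₀ᗮ, d x ∈ V₀)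
    (hd2 : d ∘L d = 0) (hcomm : T ∘L d = d ∘L T)
    (ε : V →L[ℂ] V) (hε₀ : ∀ x ∈ V₀, ε x = x) (hε₁ : ∀ x ∈ V₀ᗮ, ε x = -x)
    (Δ : V →L[ℂ] V) (hΔ : Δ = (d + ContinuousLinearMap.adjoint d) ∘L
      (d + ContinuousLinearMap.adjoint d))
    (K : Submodule ℂ V) (hK : K = LinearMap.ker (Δ : V →ₗ[ℂ] V))
    (t : ℝ) :
    LinearMap.trace ℂ V ((ε ∘L (T ∘L NormedSpace.exp ((-t) • Δ))) : V →ₗ[ℂ] V) =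
      LinearMap.trace ℂ V
        ((ε ∘L (T ∘L (K.subtypeL ∘L K.orthogonalProjectionOnto))) : V →ₗ[ℂ] V) := by
  obtain rfl : Δ = laplacian d := hΔ.trans (add_adjoint_mul_self_eq_laplacian hd2)
  subst hK
  have hdΔ : Commute d (laplacian d) := commute_laplacian hd2
  have hFΔ : Commute (NormedSpace.exp ((-t) • laplacian d)) (laplacian d) :=
    ((Commute.refl _).smul_left (-t)).exp_left
  have hdF : Commute d (NormedSpace.exp ((-t) • laplacian d)) := (hdΔ.smul_right (-t)).exp_right
  have hFP : NormedSpace.exp ((-t) • laplacian d) * (laplacian d).ker.starProjection =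
      (laplacian d).ker.starProjection :=
    NormedSpace.exp_mul_of_mul_eq_zero ℂ (by rw [smul_mul_assoc, mul_starProjection_ker, smul_zero])
  obtain ⟨g, hF, hgd⟩ := exists_eq_starProjection_ker_add_mul_commute (isSelfAdjoint_laplacian d)
    hFΔ hFP hdΔ (commute_starProjection_ker_laplacian hd2) hdF
  have hεd : (ε : Module.End ℂ V) * d = -(d * ε) := Module.End.mul_eq_neg_mul_of_odd
    V₀.sup_orthogonal_of_hasOrthogonalProjection hε₀ hε₁ hdodd₀ hdodd₁
  change supertrace (ε : Module.End ℂ V) (T * NormedSpace.exp ((-t) • laplacian d)) =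
    supertrace (ε : Module.End ℂ V) (T * (laplacian d).ker.starProjection)
  rw [hF, toLinearMap_add, supertrace, supertrace, mul_add, mul_add, map_add, add_eq_left]
  exact supertrace_mul_anticommutator_mul_eq_zero hεd congr(toLinearMap $hcomm)
    congr(toLinearMap $hgd) (adjoint d : Module.End ℂ V)

/-- McKean–Singer-type statement: for an odd operator `d` with `d² = 0` and an
even operator `T` commuting with `d` on a finite-dimensional complex inner
product space with orthogonal `ℤ/2`-grading `V = V₀ ⊕ V₀ᗮ`, the supertrace
`Str(T e^{-tΔ})`, with `Δ = (d + d*)²`, equals the supertrace of `T` on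
`ker Δ` (i.e. of `T` composed with the orthogonal projection onto `ker Δ`),
for every `t > 0`.  Here `Str(S) = Tr(ε ∘ S)` where `ε` is the grading
operator. -/
theorem mckean_singer_supertrace
    (V : Type*) [NormedAddCommGroup V] [InnerProductSpace ℂ V]
    [FiniteDimensional ℂ V]
    (V₀ : Submodule ℂ V)
    (d T : V →L[ℂ] V)
    (hdodd₀ : ∀ x ∈ V₀, d x ∈ V₀ᗮ) (hdodd₁ : ∀ x ∈ V₀ᗮ, d x ∈ V₀)
    (hTeven₀ : ∀ x ∈ V₀, T x ∈ V₀) (hTeven₁ : ∀ x ∈ V₀ᗮ, T x ∈ V₀ᗮ)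
    (hd2 : d ∘L d = 0) (hcomm : T ∘L d = d ∘L T)
    (ε : V →L[ℂ] V) (hε₀ : ∀ x ∈ V₀, ε x = x) (hε₁ : ∀ x ∈ V₀ᗮ, ε x = -x)
    (Δ : V →L[ℂ] V) (hΔ : Δ = (d + ContinuousLinearMap.adjoint d) ∘L
      (d + ContinuousLinearMap.adjoint d))
    (K : Submodule ℂ V) (hK : K = LinearMap.ker (Δ : V →ₗ[ℂ] V))
    (t : ℝ) (ht : 0 < t) :
    LinearMap.trace ℂ V ((ε ∘L (T ∘L NormedSpace.exp ((-t) • Δ))) : V →ₗ[ℂ] V) =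
      LinearMap.trace ℂ V
        ((ε ∘L (T ∘L (K.subtypeL ∘L K.orthogonalProjectionOnto))) : V →ₗ[ℂ] V) :=
  mckean_singer_supertrace_general V V₀ d T hdodd₀ hdodd₁ hd2 hcomm ε hε₀ hε₁ Δ hΔ K hK t
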